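/- Let b > 0 and let φ : [0,1] → ℝ be Lebesgue integrable. If ∫_{max(y−b,0)}^{min(y+b,1)} φ(x) dx = 0 for every y ∈ [−b, 1+b], then φ(x) = 0 for Lebesgue-almost every x ∈ [0,1]. -/

import Mathlib

open MeasureTheory Set

/-- Let `b > 0` and let `φ : [0,1] → ℝ` be Lebesgue integrable.
If `∫_{max(y−b,0)}^{min(y+b,1)} φ(x) dx = 0` for every `y ∈ [−b, 1+b]`, then
`φ(x) = 0` for Lebesgue-almost every `x ∈ [0,1]`. -/
theorem stmt0 (b : ℝ) (hb : 0 < b) (φ : ℝ → ℝ)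
    (hφ : IntegrableOn φ (Icc (0:ℝ) 1))
    (h : ∀ y ∈ Icc (-b) (1 + b),
      (∫ x in (max (y - b) 0)..(min (y + b) 1), φ x) = 0) :
    ∀ᵐ x ∂(volume.restrict (Icc (0:ℝ) 1)), φ x = 0 := by
  -- Interval integrability on subintervals of `[0,1]`.
  have hInt : ∀ u v : ℝ, u ∈ Icc (0:ℝ) 1 → v ∈ Icc (0:ℝ) 1 →
      IntervalIntegrable φ volume u v := by
    intro u v hu hv
    rw [intervalIntegrable_iff]
    exact hφ.mono_set (fun x hx => ⟨le_trans (le_min hu.1 hv.1) (le_of_lt hx.1),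
      le_trans hx.2 (max_le hu.2 hv.2)⟩)
  set F : ℝ → ℝ := fun t => ∫ x in (0:ℝ)..t, φ x with hF
  -- Step 1: F vanishes on [0,1].
  have key : ∀ n : ℕ, ∀ t ∈ Icc (0:ℝ) 1, t ≤ 2 * b * n → F t = 0 := by
    intro n
    induction n with
    | zero =>
      intro t ht ht'
      simp only [Nat.cast_zero, mul_zero] at ht'
      have : t = 0 := le_antisymm ht' ht.1
      simp [hF, this]
    | succ n ih =>
      intro t ht ht'
      have hy : t - b ∈ Icc (-b) (1 + b) := by
        constructor
        · linarith [ht.1]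
        · linarith [ht.2]
      have h0 := h (t - b) hy
      have hmin : min (t - b + b) 1 = t := by
        rw [sub_add_cancel]; exact min_eq_left ht.2
      rw [hmin] at h0
      set c : ℝ := max (t - b - b) 0 with hc
      have hc1 : c ∈ Icc (0:ℝ) 1 := ⟨le_max_right _ _,
        max_le (by linarith [ht.2, hb.le]) zero_le_one⟩
      have hcle : c ≤ 2 * b * n := by
        rcases le_or_gt (t - b - b) 0 with hle | hlt
        · rw [hc, max_eq_right hle]; positivity
        · rw [hc, max_eq_left hlt.le]
          have : (n : ℝ) + 1 = ((n + 1 : ℕ) : ℝ) := by push_cast; ring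
          nlinarith [ht']
      have hFc : F c = 0 := ih c hc1 hcle
      have hct : c ≤ t := max_le (by linarith [hb.le]) ht.1
      have hadd : F c + (∫ x in c..t, φ x) = F t :=
        intervalIntegral.integral_add_adjacent_intervals
          (hInt 0 c (by simp) hc1) (hInt c t hc1 ht)
      rw [hFc, h0, zero_add] at hadd
      exact hadd.symm
  have hF0 : ∀ t ∈ Icc (0:ℝ) 1, F t = 0 := by
    intro t ht
    obtain ⟨n, hn⟩ := exists_nat_gt (t / (2 * b))
    refine key n t ht ?_
    have h2b : (0:ℝ) < 2 * b := by linarith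
    calc t = t / (2 * b) * (2 * b) := by field_simp
    _ ≤ n * (2 * b) := by nlinarith [hn.le]
    _ = 2 * b * n := by ring
  -- Step 2: the integral over any Ioc intersected with [0,1] vanishes.
  have hIoc : ∀ u v : ℝ, u ∈ Icc (0:ℝ) 1 → v ∈ Icc (0:ℝ) 1 → u ≤ v →
      (∫ x in Ioc u v, φ x) = 0 := by
    intro u v hu hv huv
    have hadd : F u + (∫ x in u..v, φ x) = F v :=
      intervalIntegral.integral_add_adjacent_intervals
        (hInt 0 u (by simp) hu) (hInt u v hu hv)
    rw [hF0 u hu, hF0 v hv, zero_add] at hadd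
    rwa [intervalIntegral.integral_of_le huv] at hadd
  -- Step 3: reduce to equality of positive/negative part measures.
  set μ : Measure ℝ := volume.restrict (Icc (0:ℝ) 1) with hμ
  have hφμ : Integrable φ μ := hφ
  have hmeas : AEMeasurable φ μ := hφμ.aemeasurable
  set f : ℝ → ENNReal := fun x => ENNReal.ofReal (φ x) with hfdef
  set g : ℝ → ENNReal := fun x => ENNReal.ofReal (-φ x) with hgdef
  have hfm : AEMeasurable f μ := hmeas.ennreal_ofReal
  have hgm : AEMeasurable g μ := hmeas.neg.ennreal_ofReal
  -- finiteness of lintegrals over any set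
  have hfin : ∀ s : Set ℝ, (∫⁻ x in s, f x ∂μ) ≠ ⊤ ∧ (∫⁻ x in s, g x ∂μ) ≠ ⊤ := by
    intro s
    have hb1 : (∫⁻ x in s, f x ∂μ) ≤ ∫⁻ x, ‖φ x‖₊ ∂μ := by
      refine le_trans (setLIntegral_le_lintegral _ _) (lintegral_mono fun x => ?_)
      simp only [hfdef]
      rw [← enorm_eq_nnnorm, Real.enorm_eq_ofReal_abs]
      exact ENNReal.ofReal_le_ofReal (le_abs_self _)
    have hb2 : (∫⁻ x in s, g x ∂μ) ≤ ∫⁻ x, ‖φ x‖₊ ∂μ := by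
      refine le_trans (setLIntegral_le_lintegral _ _) (lintegral_mono fun x => ?_)
      simp only [hgdef]
      rw [← enorm_eq_nnnorm, Real.enorm_eq_ofReal_abs]
      exact ENNReal.ofReal_le_ofReal (neg_le_abs _)
    have hT : (∫⁻ x, ‖φ x‖₊ ∂μ) < ⊤ := hφμ.hasFiniteIntegral
    exact ⟨(lt_of_le_of_lt hb1 hT).ne, (lt_of_le_of_lt hb2 hT).ne⟩
  -- from vanishing real integral on a set, lintegrals of pos/neg part agree
  have hsame : ∀ s : Set ℝ, MeasurableSet s → (∫ x in s, φ x ∂μ) = 0 →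
      (∫⁻ x in s, f x ∂μ) = (∫⁻ x in s, g x ∂μ) := by
    intro s hs hzero
    have hInts : Integrable φ (μ.restrict s) := hφμ.restrict
    have := MeasureTheory.integral_eq_lintegral_pos_part_sub_lintegral_neg_part hInts
    rw [hzero] at this
    have hfs := (hfin s).1
    have hgs := (hfin s).2
    have heq : (∫⁻ x in s, f x ∂μ).toReal = (∫⁻ x in s, g x ∂μ).toReal := by linarith
    exact (ENNReal.toReal_eq_toReal_iff' hfs hgs).mp heq
  -- Step 4: the two withDensity measures agree on all Ioc intervals.
  haveI hμfin : IsFiniteMeasure (μ.withDensity f) := by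
    constructor
    rw [withDensity_apply _ MeasurableSet.univ, Measure.restrict_univ, ← setLIntegral_univ]
    exact lt_top_iff_ne_top.mpr (hfin univ).1
  have hext : μ.withDensity f = μ.withDensity g := by
    have huniv : (μ.withDensity f) univ = (μ.withDensity g) univ := by
      rw [withDensity_apply _ MeasurableSet.univ, withDensity_apply _ MeasurableSet.univ]
      refine hsame univ MeasurableSet.univ ?_
      rw [Measure.restrict_univ, hμ]
      calc (∫ x in Icc (0:ℝ) 1, φ x) = ∫ x in Ioc (0:ℝ) 1, φ x :=
            (setIntegral_congr_set Ioc_ae_eq_Icc).symm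
      _ = 0 := hIoc 0 1 (by simp) (by simp) zero_le_one
    refine MeasureTheory.Measure.ext_of_Ioc_finite _ _ huniv (fun u v huv => ?_)
    rw [withDensity_apply _ measurableSet_Ioc, withDensity_apply _ measurableSet_Ioc]
    refine hsame _ measurableSet_Ioc ?_
    -- ∫ over Ioc u v w.r.t. μ equals ∫ over Ioc (max u 0) (min v 1) w.r.t volume
    rw [hμ, Measure.restrict_restrict measurableSet_Ioc]
    have hIcc : (Ioc u v ∩ Icc 0 1 : Set ℝ) =ᵐ[volume] Ioc (max u 0) (min v 1) := by
      have h2 : (Ioc u v ∩ Icc 0 1 : Set ℝ) =ᵐ[volume] (Ioc u v ∩ Ioc 0 1 : Set ℝ) :=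
        Filter.EventuallyEq.inter Filter.EventuallyEq.rfl Ioc_ae_eq_Icc.symm
      rwa [Ioc_inter_Ioc] at h2
    rw [setIntegral_congr_set hIcc]
    rcases le_or_gt (max u 0) (min v 1) with hle | hlt
    · exact hIoc _ _ ⟨le_max_right _ _, le_trans hle (min_le_right _ _)⟩
        ⟨le_trans (le_max_right _ _) hle, min_le_right _ _⟩ hle
    · rw [Ioc_eq_empty (not_lt.mpr hlt.le), Measure.restrict_empty, integral_zero_measure]
  -- Step 5: conclude φ = 0 a.e.
  have hae : f =ᵐ[μ] g := (withDensity_eq_iff hfm hgm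
    (by rw [← setLIntegral_univ]; exact (hfin univ).1)).mp hext
  refine hae.mono fun x hx => ?_
  simp only [hfdef, hgdef] at hx
  rcases lt_trichotomy (φ x) 0 with hneg | hzero | hpos
  · exfalso
    rw [ENNReal.ofReal_eq_zero.mpr hneg.le] at hx
    exact absurd hx.symm (by simp [ENNReal.ofReal_eq_zero, hneg])
  · exact hzero
  · exfalso
    rw [ENNReal.ofReal_eq_zero.mpr (by linarith : -φ x ≤ 0)] at hx
    exact absurd hx (by simp [ENNReal.ofReal_eq_zero, hpos])
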